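/- arXiv:2505.06028 — 3 statements merged into one kernel-verified Lean document; each statement's English description precedes it below -/
import Mathlib

section
/- Let B(z_1,…,z_d) be a power series with nonnegative real coefficients that has full rank and converges absolutely on a neighborhood Ω of 0 in ℂ^d. Then its cumulant generating function K : t ↦ log B(e^{t_1},…,e^{t_d}) is strictly convex on the set Ψ := {t ∈ ℝ^d : e^t ∈ Ω} (where e^t := (e^{t_1},…,e^{t_d})). -/
open scoped BigOperators Topology

namespace PaperStmt

variable {d : ℕ}

/-- Evaluation at a real point of the multivariate power series with coefficient family `c`. -/
noncomputable def evalR (c : (Fin d → ℕ) → ℝ) (x : Fin d → ℝ) : ℝ :=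
  ∑' n : Fin d → ℕ, c n * ∏ j, x j ^ n j

/-- `c` has full rank: the differences of vectors in the support span all of `ℝ^d`. -/
def FullRank (c : (Fin d → ℕ) → ℝ) : Prop :=
  Submodule.span ℝ
    {v : Fin d → ℝ | ∃ n m : Fin d → ℕ, c n ≠ 0 ∧ c m ≠ 0 ∧
      v = fun j => (n j : ℝ) - (m j : ℝ)} = ⊤

end PaperStmt

open PaperStmt

/-! With `B(e^t) = ∑ₙ cₙ exp ⟨n, t⟩`, `K` is a log-sum-exp. Normalising the sums at `x` and `y`
to `1` and applying strict convexity of `exp` termwise gives Hölder's inequality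
`B(e^(ax+by)) ≤ B(e^x)^a B(e^y)^b`, strict unless `⟨n, x - y⟩` is constant on the support of `c`.
By full rank, some difference of support vectors pairs nontrivially with `x - y ≠ 0`. -/

open Real Matrix

theorem Matrix.exists_dotProduct_ne_zero_of_span_eq_top {R ι : Type*} [CommRing R] [LinearOrder R]
    [IsStrictOrderedRing R] [Fintype ι] {S : Set (ι → R)} (hS : Submodule.span R S = ⊤)
    {v : ι → R} (hv : v ≠ 0) : ∃ u ∈ S, u ⬝ᵥ v ≠ 0 := by
  by_contra! h
  have hker : Submodule.span R S ≤ LinearMap.ker ((dotProductBilin R R).flip v) :=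
    Submodule.span_le.2 fun u hu => LinearMap.mem_ker.2 (h u hu)
  rw [hS] at hker
  exact hv (dotProduct_self_eq_zero.1 (hker Submodule.mem_top))

section LogSumExp

variable {a b : ℝ}

theorem mul_exp_convexComb_le {w p q : ℝ} (hw : 0 ≤ w) (ha : 0 ≤ a) (hb : 0 ≤ b)
    (hab : a + b = 1) : w * exp (a * p + b * q) ≤ a * (w * exp p) + b * (w * exp q) := by
  have h := convexOn_exp.2 (Set.mem_univ p) (Set.mem_univ q) ha hb hab
  simp only [smul_eq_mul] at h
  nlinarith

theorem mul_exp_convexComb_lt {w p q : ℝ} (hw : 0 < w) (hpq : p ≠ q) (ha : 0 < a) (hb : 0 < b)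
    (hab : a + b = 1) : w * exp (a * p + b * q) < a * (w * exp p) + b * (w * exp q) := by
  have h := strictConvexOn_exp.2 (Set.mem_univ p) (Set.mem_univ q) hpq ha hb hab
  simp only [smul_eq_mul] at h
  nlinarith

variable {ι : Type*} {w s r : ι → ℝ}

theorem summable_mul_exp_convexComb (hw : ∀ k, 0 ≤ w k) (hs : Summable fun k => w k * exp (s k))
    (hr : Summable fun k => w k * exp (r k)) (ha : 0 ≤ a) (hb : 0 ≤ b) (hab : a + b = 1) :
    Summable fun k => w k * exp (a * s k + b * r k) :=
  .of_nonneg_of_le (fun k => mul_nonneg (hw k) (exp_pos _).le)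
    (fun k => mul_exp_convexComb_le (hw k) ha hb hab) ((hs.mul_left a).add (hr.mul_left b))

theorem tsum_mul_exp_convexComb_lt_one (hw : ∀ k, 0 ≤ w k)
    (hs : HasSum (fun k => w k * exp (s k)) 1) (hr : HasSum (fun k => w k * exp (r k)) 1)
    {i : ι} (hi : w i ≠ 0) (hsr : s i ≠ r i) (ha : 0 < a) (hb : 0 < b) (hab : a + b = 1) :
    ∑' k, w k * exp (a * s k + b * r k) < 1 := by
  have hsum : HasSum (fun k => a * (w k * exp (s k)) + b * (w k * exp (r k))) 1 := by
    simpa [hab] using (hs.mul_left a).add (hr.mul_left b)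
  exact hasSum_lt (fun k => mul_exp_convexComb_le (hw k) ha.le hb.le hab)
    (mul_exp_convexComb_lt ((hw i).lt_of_ne' hi) hsr ha hb hab)
    (summable_mul_exp_convexComb hw hs.summable hr.summable ha.le hb.le hab).hasSum hsum

theorem log_tsum_mul_exp_convexComb_lt (hw : ∀ k, 0 ≤ w k)
    (hs : Summable fun k => w k * exp (s k)) (hr : Summable fun k => w k * exp (r k))
    {i j : ι} (hi : w i ≠ 0) (hj : w j ≠ 0) (hij : s i - r i ≠ s j - r j)
    (ha : 0 < a) (hb : 0 < b) (hab : a + b = 1) :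
    log (∑' k, w k * exp (a * s k + b * r k)) <
      a * log (∑' k, w k * exp (s k)) + b * log (∑' k, w k * exp (r k)) := by
  have hpos : ∀ {f : ι → ℝ}, Summable (fun k => w k * exp (f k)) →
      0 < ∑' k, w k * exp (f k) := fun {f} hf =>
    hf.tsum_pos (fun k => mul_nonneg (hw k) (exp_pos _).le) i
      (mul_pos ((hw i).lt_of_ne' hi) (exp_pos _))
  have hnormalize : ∀ {f : ι → ℝ} {T : ℝ}, HasSum (fun k => w k * exp (f k)) T → 0 < T →
      HasSum (fun k => w k * exp (f k - log T)) 1 := fun {f T} hf hT => by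
    simpa only [exp_sub, exp_log hT, mul_div_assoc, div_self hT.ne'] using hf.div_const T
  set U := ∑' k, w k * exp (s k)
  set V := ∑' k, w k * exp (r k)
  obtain ⟨k, hk, hsr⟩ : ∃ k, w k ≠ 0 ∧ s k - log U ≠ r k - log V := by
    by_contra! h
    exact hij (by linarith [h i hi, h j hj])
  have key := tsum_mul_exp_convexComb_lt_one hw (hnormalize (T := U) hs.hasSum (hpos hs))
    (hnormalize (T := V) hr.hasSum (hpos hr)) hk hsr ha hb hab
  have hshift : ∀ k, w k * exp (a * (s k - log U) + b * (r k - log V)) =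
      w k * exp (a * s k + b * r k) * exp (-(a * log U + b * log V)) := fun k => by
    rw [mul_assoc, ← exp_add]
    ring_nf
  simp_rw [hshift, tsum_mul_right, exp_neg, ← div_eq_mul_inv,
    div_lt_one (exp_pos _)] at key
  rwa [log_lt_iff_lt_exp (hpos (summable_mul_exp_convexComb hw hs hr ha.le hb.le hab))]

end LogSumExp

section PowerSeries

variable {ι : Type*} [Fintype ι]

theorem prod_exp_pow_eq_exp_dotProduct (t : ι → ℝ) (n : ι → ℕ) :
    ∏ j, exp (t j) ^ n j = exp ((fun j => (n j : ℝ)) ⬝ᵥ t) := by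
  simp only [dotProduct, exp_sum, exp_nat_mul]

theorem norm_ofReal_mul_prod_exp_pow (c : ℝ) (t : ι → ℝ) (n : ι → ℕ) :
    ‖(c : ℂ) * ∏ j, (exp (t j) : ℂ) ^ n j‖ = |c| * exp ((fun j => (n j : ℝ)) ⬝ᵥ t) := by
  simp [← prod_exp_pow_eq_exp_dotProduct]

end PowerSeries

theorem PaperStmt.evalR_exp {d : ℕ} (c : (Fin d → ℕ) → ℝ) (t : Fin d → ℝ) :
    evalR c (fun j => exp (t j)) = ∑' n, c n * exp ((fun j => (n j : ℝ)) ⬝ᵥ t) := by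
  simp only [evalR, prod_exp_pow_eq_exp_dotProduct]

theorem cumulant_generating_function_strictly_convex_general {d : ℕ}
    (c : (Fin d → ℕ) → ℝ)
    (hnonneg : ∀ n, 0 ≤ c n)
    (Ω : Set (Fin d → ℂ))
    (hconv : ∀ z ∈ Ω, Summable fun n : Fin d → ℕ => ‖(c n : ℂ) * ∏ j, z j ^ n j‖)
    (hrank : FullRank c)
    (K : (Fin d → ℝ) → ℝ)
    (hK : K = fun t => Real.log (evalR c fun j => Real.exp (t j)))
    (Ψ : Set (Fin d → ℝ))
    (hΨ : Ψ = {t | (fun j => (Real.exp (t j) : ℂ)) ∈ Ω}) :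
    ∀ x ∈ Ψ, ∀ y ∈ Ψ, x ≠ y → ∀ a b : ℝ, 0 < a → 0 < b → a + b = 1 →
      a • x + b • y ∈ Ψ → K (a • x + b • y) < a * K x + b * K y := by
  subst hK hΨ
  intro x hx y hy hxy a b ha hb hab _
  have hsum : ∀ t, (fun j => (exp (t j) : ℂ)) ∈ Ω →
      Summable fun n => c n * exp ((fun j => (n j : ℝ)) ⬝ᵥ t) := fun t ht =>
    (hconv _ ht).congr fun n => by rw [norm_ofReal_mul_prod_exp_pow, abs_of_nonneg (hnonneg n)]
  obtain ⟨-, ⟨n, m, hn, hm, rfl⟩, hnm⟩ :=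
    exists_dotProduct_ne_zero_of_span_eq_top hrank (sub_ne_zero.2 hxy)
  simp only [evalR_exp, dotProduct_add, dotProduct_smul, smul_eq_mul]
  refine log_tsum_mul_exp_convexComb_lt hnonneg (hsum x hx) (hsum y hy) hn hm ?_ ha hb hab
  contrapose! hnm
  simp only [dotProduct, Pi.sub_apply, mul_sub, sub_mul, Finset.sum_sub_distrib] at hnm ⊢
  linarith

/-- Convexity of the cumulant generating function.
If a power series `B` (given by its coefficient family `c`) with nonnegative coefficients
has full rank and converges absolutely on a neighborhood `Ω` of `0` in `ℂ^d`,
then its cumulant generating function `K : t ↦ log B(e^t)` is strictly convex on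
`Ψ := {t ∈ ℝ^d : e^t ∈ Ω}`. -/
theorem cumulant_generating_function_strictly_convex {d : ℕ}
    (c : (Fin d → ℕ) → ℝ)
    (hnonneg : ∀ n, 0 ≤ c n)
    (Ω : Set (Fin d → ℂ)) (hΩ : Ω ∈ nhds (0 : Fin d → ℂ))
    (hconv : ∀ z ∈ Ω, Summable fun n : Fin d → ℕ => ‖(c n : ℂ) * ∏ j, z j ^ n j‖)
    (hrank : FullRank c)
    (K : (Fin d → ℝ) → ℝ)
    (hK : K = fun t => Real.log (evalR c fun j => Real.exp (t j)))
    (Ψ : Set (Fin d → ℝ))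
    (hΨ : Ψ = {t | (fun j => (Real.exp (t j) : ℂ)) ∈ Ω}) :
    ∀ x ∈ Ψ, ∀ y ∈ Ψ, x ≠ y → ∀ a b : ℝ, 0 < a → 0 < b → a + b = 1 →
      a • x + b • y ∈ Ψ → K (a • x + b • y) < a * K x + b * K y :=
  cumulant_generating_function_strictly_convex_general c hnonneg Ω hconv hrank K hK Ψ hΨ
end

section
/- Multivariate daffodil lemma: let B(z_1,…,z_d) be a power series with nonnegative real coefficients and let ζ ∈ ℝ_{>0}^d be such that the closed polydisc D(ζ) := {z ∈ ℂ^d : |z_j| ≤ ζ_j for all j} is contained in the domain of convergence of B. Then |B(z)| ≤ B(ζ) for all z ∈ D(ζ). If moreover B has full rank, then |B(z)| attains the value B(ζ) at a unique point of D(ζ) (namely z = ζ) if and only if B is aperiodic. -/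
open scoped BigOperators

namespace PaperStmt

variable {d : ℕ}

/-- Evaluation at a complex point of the multivariate power series with coefficients `c`. -/
noncomputable def evalC (c : (Fin d → ℕ) → ℝ) (z : Fin d → ℂ) : ℂ :=
  ∑' n : Fin d → ℕ, (c n : ℂ) * ∏ j, z j ^ n j

/-- `c` is `q`-periodic. -/
def QPeriodic (c : (Fin d → ℕ) → ℝ) (q : ℕ) : Prop :=
  ∃ p : Fin d → ℕ, (¬ ∀ j, q ∣ p j) ∧ ∃ r : ℤ,
    ∀ n : Fin d → ℕ, c n ≠ 0 →
      ∃ k : ℕ, (∑ j, (p j : ℤ) * (n j : ℤ)) = r + q * k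

/-- `c` is aperiodic if it is not `q`-periodic for any `q ≥ 2`. -/
def Aperiodic (c : (Fin d → ℕ) → ℝ) : Prop :=
  ∀ q : ℕ, 2 ≤ q → ¬ QPeriodic c q

end PaperStmt

open PaperStmt

open Complex Finset Real

/-!
The bound is the triangle inequality, term by term. Equality forces `c n z^n = w c n ζ^n` for a
single unit `w`, so `u = z / ζ` has `u^n = w` on the support. Full rank makes every `|u j| = 1`,
and, since an integer matrix `M` whose rows are a real basis of differences of support vectors
satisfies `adj M * M = det M • 1`, it makes every `u j` an `N`-th root of unity `ω ^ p j`. Then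
`p ⬝ n` is constant modulo `N` on the support: a `q`-periodicity unless `u = 1`. Conversely, a
`q`-periodicity `p` yields the point `z j = ζ j ω ^ p j`, `ω` a primitive `q`-th root of unity,
at which `|B z| = B ζ`.
-/

theorem Complex.exists_norm_eq_one_forall_eq_mul_of_tsum_le {ι : Type*} {a : ι → ℂ} {g : ι → ℝ}
    (hg : Summable g) (hag : ∀ i, ‖a i‖ ≤ g i) (hsum : ∑' i, g i ≤ ‖∑' i, a i‖) :
    ∃ w : ℂ, ‖w‖ = 1 ∧ ∀ i, a i = w * g i := by
  set w := exp (arg (∑' i, a i) * I)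
  have hw : ‖w‖ = 1 := norm_exp_ofReal_mul_I _
  have hw0 : w ≠ 0 := norm_ne_zero_iff.1 (by rw [hw]; exact one_ne_zero)
  have ha : Summable fun i => w⁻¹ * a i := (Summable.of_norm_bounded hg hag).mul_left _
  have hre_le : ∀ i, (w⁻¹ * a i).re ≤ g i := fun i =>
    (re_le_norm _).trans (by rw [norm_mul, norm_inv, hw, inv_one, one_mul]; exact hag i)
  have hrot : w⁻¹ * ∑' i, a i = ‖∑' i, a i‖ := by
    rw [inv_mul_eq_iff_eq_mul₀ hw0, mul_comm, norm_mul_exp_arg_mul_I]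
  have hre : Summable fun i => (w⁻¹ * a i).re := (hasSum_re ha.hasSum).summable
  have hre_sum : ∑' i, (w⁻¹ * a i).re = ‖∑' i, a i‖ := by
    rw [← re_tsum ha, tsum_mul_left, hrot, ofReal_re]
  refine ⟨w, hw, fun i => ?_⟩
  have hre_eq : (w⁻¹ * a i).re = g i := by
    by_contra hne
    have := hre.tsum_lt_tsum hre_le (lt_of_le_of_ne (hre_le i) hne) hg
    linarith
  have hreal : w⁻¹ * a i = g i := by
    have hnorm : (w⁻¹ * a i).re = ‖w⁻¹ * a i‖ := le_antisymm (re_le_norm _) (by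
      rw [norm_mul, norm_inv, hw, inv_one, one_mul, hre_eq]; exact hag i)
    rw [← hre_eq, ← eq_re_of_ofReal_le (r := 0) (by simpa using re_eq_norm.1 hnorm)]
  rw [← hreal, mul_inv_cancel_left₀ hw0]

theorem norm_ofReal_mul_prod_pow_le {ι : Type*} [Fintype ι] {a : ℝ} (ha : 0 ≤ a) {z : ι → ℂ}
    {ζ : ι → ℝ} (hz : ∀ j, ‖z j‖ ≤ ζ j) (n : ι → ℕ) :
    ‖(a : ℂ) * ∏ j, z j ^ n j‖ ≤ a * ∏ j, ζ j ^ n j := by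
  rw [norm_mul, Complex.norm_prod, Complex.norm_real, Real.norm_of_nonneg ha]
  simp only [norm_pow]
  gcongr with j
  exact hz j

theorem exists_ne_zero_single_mem_closure_of_span_eq_top {ι : Type*} [Fintype ι] [DecidableEq ι]
    {V : Set (ι → ℤ)} (hV : Submodule.span ℝ ((fun v => ((↑) ∘ v : ι → ℝ)) '' V) = ⊤) :
    ∃ D : ℤ, D ≠ 0 ∧ ∀ j, Pi.single j D ∈ AddSubgroup.closure V := by
  obtain ⟨s, hsV, hspan, hli⟩ := exists_linearIndependent ℝ ((fun v => ((↑) ∘ v : ι → ℝ)) '' V)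
  have : Fintype s := hli.setFinite.fintype
  have hcard : Fintype.card ι = Fintype.card s := by
    rw [← finrank_span_eq_card hli, Subtype.range_coe, hspan, hV, finrank_top,
      Module.finrank_fintype_fun_eq_card]
  choose v hvV hv using fun x : s => hsV x.2
  let e := Fintype.equivOfCardEq hcard
  let M : Matrix ι ι ℤ := Matrix.of fun i => v (e i)
  have hdet : M.det ≠ 0 := by
    have hrows : LinearIndependent ℝ ((Int.castRingHom ℝ).mapMatrix M).row := by
      have : ((Int.castRingHom ℝ).mapMatrix M).row = Subtype.val ∘ e := by
        ext i j
        simp [M, ← hv]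
      rw [this]
      exact hli.comp e e.injective
    have := ((Matrix.isUnit_iff_isUnit_det _).1
      (Matrix.linearIndependent_rows_iff_isUnit.1 hrows)).ne_zero
    rwa [← RingHom.map_det, ne_eq, eq_intCast, Int.cast_eq_zero] at this
  refine ⟨M.det, hdet, fun j => ?_⟩
  -- `adj M * M = det M • 1`, read row by row
  have hrow : Pi.single j M.det = ∑ i, M.adjugate j i • v (e i) := by
    ext k
    have := congrFun (congrFun (Matrix.adjugate_mul M) j) k
    rw [Matrix.mul_apply, Matrix.smul_apply, Matrix.one_apply] at this
    rw [Finset.sum_apply, Pi.single_apply]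
    simpa [eq_comm, M] using this.symm
  rw [hrow]
  exact sum_mem fun i _ => zsmul_mem (AddSubgroup.subset_closure (hvV _)) _

theorem prod_zpow_eq_one_of_mem_closure {ι G₀ : Type*} [Fintype ι] [CommGroupWithZero G₀]
    {u : ι → G₀} (hu : ∀ j, u j ≠ 0) {V : Set (ι → ℤ)} (hV : ∀ v ∈ V, ∏ j, u j ^ v j = 1)
    {v : ι → ℤ} (hv : v ∈ AddSubgroup.closure V) : ∏ j, u j ^ v j = 1 := by
  induction hv using AddSubgroup.closure_induction with
  | mem v hv => exact hV v hv
  | zero => simp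
  | add v v' _ _ h h' => simp [zpow_add₀ (hu _), prod_mul_distrib, h, h']
  | neg v _ h => simp [h]

theorem eq_one_of_prod_pow_eq_one {ι : Type*} [Fintype ι] {x : ι → ℝ}
    (hx0 : ∀ k, 0 ≤ x k) (hx1 : ∀ k, x k ≤ 1) {n : ι → ℕ} (hprod : ∏ k, x k ^ n k = 1)
    {j : ι} (hj : n j ≠ 0) : x j = 1 := by
  classical
  rw [← mul_prod_erase _ _ (mem_univ j)] at hprod
  have hrest : ∏ k ∈ univ.erase j, x k ^ n k ≤ 1 :=
    prod_le_one (fun k _ => pow_nonneg (hx0 k) _) fun k _ => pow_le_one₀ (hx0 k) (hx1 k)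
  have hxj : x j ^ n j ≤ 1 := pow_le_one₀ (hx0 j) (hx1 j)
  refine (pow_eq_one_iff_of_nonneg (hx0 j) hj).1 (le_antisymm hxj ?_)
  nlinarith [pow_nonneg (hx0 j) (n j)]

namespace PaperStmt

variable {d : ℕ} {c : (Fin d → ℕ) → ℝ} {ζ : Fin d → ℝ} {z : Fin d → ℂ}

theorem norm_evalC_le (hc : ∀ n, 0 ≤ c n) (hconv : Summable fun n => c n * ∏ j, ζ j ^ n j)
    (hz : ∀ j, ‖z j‖ ≤ ζ j) : ‖evalC c z‖ ≤ evalR c ζ :=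
  tsum_of_norm_bounded hconv.hasSum fun n => norm_ofReal_mul_prod_pow_le (hc n) hz n

theorem evalR_nonneg (hc : ∀ n, 0 ≤ c n) (hζ : ∀ j, 0 ≤ ζ j) : 0 ≤ evalR c ζ :=
  tsum_nonneg fun n => mul_nonneg (hc n) (prod_nonneg fun j _ => pow_nonneg (hζ j) _)

theorem evalC_eq_mul_evalR {w : ℂ}
    (h : ∀ n, c n ≠ 0 → ∏ j, z j ^ n j = w * ∏ j, (ζ j : ℂ) ^ n j) :
    evalC c z = w * evalR c ζ := by
  rw [evalC, evalR, ofReal_tsum, ← tsum_mul_left]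
  refine tsum_congr fun n => ?_
  by_cases hn : c n = 0
  · simp [hn]
  · rw [h n hn]; push_cast; ring

theorem exists_forall_prod_eq_of_norm_evalC_eq (hc : ∀ n, 0 ≤ c n)
    (hconv : Summable fun n => c n * ∏ j, ζ j ^ n j) (hz : ∀ j, ‖z j‖ ≤ ζ j)
    (heq : ‖evalC c z‖ = evalR c ζ) :
    ∃ w : ℂ, ‖w‖ = 1 ∧ ∀ n, c n ≠ 0 → ∏ j, z j ^ n j = w * ∏ j, (ζ j : ℂ) ^ n j := by
  obtain ⟨w, hw, hterm⟩ := exists_norm_eq_one_forall_eq_mul_of_tsum_le hconv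
    (fun n => norm_ofReal_mul_prod_pow_le (hc n) hz n) heq.ge
  refine ⟨w, hw, fun n hn => mul_left_cancel₀ (ofReal_ne_zero.2 hn) ?_⟩
  rw [hterm n]; push_cast; ring

/-- The difference set `Δ(S_B)`, as integer vectors. -/
def supportDiffs (c : (Fin d → ℕ) → ℝ) : Set (Fin d → ℤ) :=
  {v | ∃ n m : Fin d → ℕ, c n ≠ 0 ∧ c m ≠ 0 ∧ v = fun j => (n j : ℤ) - m j}

theorem FullRank.exists_ne_zero (hF : FullRank c) (j : Fin d) : ∃ n, c n ≠ 0 ∧ n j ≠ 0 := by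
  by_contra! h
  have hker : Submodule.span ℝ {v : Fin d → ℝ | ∃ n m : Fin d → ℕ, c n ≠ 0 ∧ c m ≠ 0 ∧
      v = fun j => (n j : ℝ) - (m j : ℝ)} ≤ LinearMap.ker (LinearMap.proj j) := by
    rw [Submodule.span_le]
    rintro _ ⟨n, m, hn, hm, rfl⟩
    simp [h n hn, h m hm]
  rw [hF] at hker
  simpa using hker (Submodule.mem_top (x := Pi.single j (1 : ℝ)))

theorem FullRank.exists_ne_zero_single_mem_closure (hF : FullRank c) :
    ∃ D : ℤ, D ≠ 0 ∧ ∀ j, Pi.single j D ∈ AddSubgroup.closure (supportDiffs c) := by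
  refine exists_ne_zero_single_mem_closure_of_span_eq_top (hF ▸ congrArg _ ?_)
  ext v
  simp only [supportDiffs, Set.mem_image, Set.mem_ofPred_eq]
  constructor
  · rintro ⟨_, ⟨n, m, hn, hm, rfl⟩, rfl⟩
    exact ⟨n, m, hn, hm, by ext; simp⟩
  · rintro ⟨n, m, hn, hm, rfl⟩
    exact ⟨_, ⟨n, m, hn, hm, rfl⟩, by ext; simp⟩

theorem FullRank.exists_pow_eq_one {G₀ : Type*} [CommGroupWithZero G₀] (hF : FullRank c)
    {u : Fin d → G₀} (hu : ∀ j, u j ≠ 0) {w : G₀} (hw : ∀ n, c n ≠ 0 → ∏ j, u j ^ n j = w) :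
    ∃ N : ℕ, 0 < N ∧ ∀ j, u j ^ N = 1 := by
  obtain ⟨D, hD, hsingle⟩ := hF.exists_ne_zero_single_mem_closure
  have hdiff : ∀ v ∈ supportDiffs c, ∏ j, u j ^ v j = 1 := by
    rintro _ ⟨n, m, hn, hm, rfl⟩
    simp only [zpow_sub₀ (hu _), zpow_natCast, prod_div_distrib, hw n hn, hw m hm]
    exact div_self (hw n hn ▸ prod_ne_zero_iff.2 fun j _ => pow_ne_zero _ (hu j))
  refine ⟨D.natAbs, Int.natAbs_pos.2 hD, fun j => ?_⟩
  have hDj : u j ^ D = 1 := by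
    simpa [Pi.single_apply] using prod_zpow_eq_one_of_mem_closure hu hdiff (hsingle j)
  rcases D.natAbs_eq with h | h
  · rwa [h, zpow_natCast] at hDj
  · rwa [h, zpow_neg, zpow_natCast, inv_eq_one] at hDj

theorem qPeriodic_of_modEq {q : ℕ} (p : Fin d → ℕ) (hp : ¬ ∀ j, q ∣ p j) (n₀ : Fin d → ℕ)
    (h : ∀ n, c n ≠ 0 → ∑ j, p j * n j ≡ ∑ j, p j * n₀ j [MOD q]) : QPeriodic c q := by
  refine ⟨p, hp, ((∑ j, p j * n₀ j) % q : ℕ), fun n hn => ⟨(∑ j, p j * n j) / q, ?_⟩⟩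
  rw [← h n hn]
  exact_mod_cast (Nat.mod_add_div _ q).symm

theorem QPeriodic.exists_ne_norm_evalC_eq {q : ℕ} (hper : QPeriodic c q) (hq : 2 ≤ q)
    (hc : ∀ n, 0 ≤ c n) (hζ : ∀ j, 0 < ζ j) :
    ∃ z : Fin d → ℂ, (∀ j, ‖z j‖ ≤ ζ j) ∧ ‖evalC c z‖ = evalR c ζ ∧
      z ≠ fun j => (ζ j : ℂ) := by
  obtain ⟨p, hp, r, hr⟩ := hper
  have hω := isPrimitiveRoot_exp q (by omega)
  set ω := exp (2 * π * I / q)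
  have hω1 : ‖ω‖ = 1 := hω.norm'_eq_one (by omega)
  have hω0 : ω ≠ 0 := hω.ne_zero (by omega)
  refine ⟨fun j => ζ j * ω ^ p j, fun j => ?_, ?_, fun h => hp fun j => ?_⟩
  · simp [hω1, abs_of_pos (hζ j)]
  · have hterm : ∀ n, c n ≠ 0 →
        ∏ j, ((ζ j : ℂ) * ω ^ p j) ^ n j = ω ^ r * ∏ j, (ζ j : ℂ) ^ n j := by
      intro n hn
      obtain ⟨k, hk⟩ := hr n hn
      have hpn : ω ^ (∑ j, p j * n j) = ω ^ r := by
        rw [← zpow_natCast, Nat.cast_sum]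
        push_cast
        rw [hk, zpow_add₀ hω0, zpow_mul, hω.zpow_eq_one, one_zpow, mul_one]
      simp only [mul_pow, prod_mul_distrib, ← pow_mul, prod_pow_eq_pow_sum, hpn]
      ring
    rw [evalC_eq_mul_evalR hterm, norm_mul, norm_zpow, hω1, one_zpow, one_mul, norm_real,
      Real.norm_of_nonneg (evalR_nonneg hc fun j => (hζ j).le)]
  · have hj := congrFun h j
    simp only [mul_eq_left₀ (ofReal_ne_zero.2 (hζ j).ne')] at hj
    exact (hω.pow_eq_one_iff_dvd _).1 hj

theorem Aperiodic.eq_one_of_forall_prod_pow_eq (hap : Aperiodic c) (hF : FullRank c)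
    {u : Fin d → ℂ} (hu : ∀ j, ‖u j‖ = 1) {w : ℂ} (hw : ∀ n, c n ≠ 0 → ∏ j, u j ^ n j = w) :
    u = 1 := by
  by_contra hne
  obtain ⟨j₀, hj₀⟩ : ∃ j, u j ≠ 1 := by simpa [funext_iff] using hne
  obtain ⟨N, hN, hpow⟩ :=
    hF.exists_pow_eq_one (fun j => norm_ne_zero_iff.1 (by simp [hu j])) hw
  have : NeZero N := ⟨hN.ne'⟩
  have hω := isPrimitiveRoot_exp N hN.ne'
  choose p hpN hp using fun j => hω.eq_pow_of_pow_eq_one (hpow j)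
  have hp₀ : ¬ ∀ j, N ∣ p j := fun hdvd => hj₀ <| by
    rw [← hp, Nat.eq_zero_of_dvd_of_lt (hdvd j₀) (hpN j₀), pow_zero]
  have hN2 : 2 ≤ N := by
    have : p j₀ ≠ 0 := fun h => hj₀ (by rw [← hp, h, pow_zero])
    have := hpN j₀
    omega
  obtain ⟨n₀, hn₀, -⟩ := hF.exists_ne_zero j₀
  refine hap N hN2 (qPeriodic_of_modEq p hp₀ n₀ fun n hn => ?_)
  rw [hω.eq_orderOf, ← (hω.isOfFinOrder hN.ne').pow_eq_pow_iff_modEq, ← prod_pow_eq_pow_sum,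
    ← prod_pow_eq_pow_sum]
  simp only [pow_mul, hp, hw n hn, hw n₀ hn₀]

theorem eq_of_norm_evalC_eq (hc : ∀ n, 0 ≤ c n) (hζ : ∀ j, 0 < ζ j)
    (hconv : Summable fun n => c n * ∏ j, ζ j ^ n j) (hF : FullRank c) (hap : Aperiodic c)
    (hz : ∀ j, ‖z j‖ ≤ ζ j) (heq : ‖evalC c z‖ = evalR c ζ) :
    z = fun j => (ζ j : ℂ) := by
  obtain ⟨w, hw1, hw⟩ := exists_forall_prod_eq_of_norm_evalC_eq hc hconv hz heq
  have hζ0 : ∀ j, (ζ j : ℂ) ≠ 0 := fun j => ofReal_ne_zero.2 (hζ j).ne'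
  set u : Fin d → ℂ := fun j => z j / ζ j
  have hu : ∀ n, c n ≠ 0 → ∏ j, u j ^ n j = w := by
    intro n hn
    simp only [u, div_pow, prod_div_distrib, hw n hn]
    exact mul_div_cancel_right₀ _ (prod_ne_zero_iff.2 fun j _ => pow_ne_zero _ (hζ0 j))
  have hu_norm : ∀ j, ‖u j‖ = 1 := by
    intro j
    obtain ⟨n, hn, hnj⟩ := hF.exists_ne_zero j
    refine eq_one_of_prod_pow_eq_one (fun k => norm_nonneg _) (fun k => ?_) ?_ hnj
    · simpa [u, abs_of_pos (hζ k), div_le_one (hζ k)] using hz k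
    · simpa [norm_prod, hw1] using congrArg norm (hu n hn)
  have hu1 := hap.eq_one_of_forall_prod_pow_eq hF hu_norm hu
  funext j
  simpa [u, div_eq_one_iff_eq (hζ0 j)] using congrFun hu1 j

end PaperStmt

/-- Multivariate daffodil lemma. Let `B` (coefficients `c`) have
nonnegative coefficients and let `ζ ∈ ℝ_{>0}^d` be such that the closed polydisc of
radius `ζ` is contained in the domain of convergence of `B`. Then `|B(z)| ≤ B(ζ)` on the
polydisc; and if `B` has full rank, `|B(z)|` attains the value `B(ζ)` at a unique point
of the polydisc (namely `z = ζ`) if and only if `B` is aperiodic. -/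
theorem multivariate_daffodil {d : ℕ}
    (c : (Fin d → ℕ) → ℝ)
    (hnonneg : ∀ n, 0 ≤ c n)
    (ζ : Fin d → ℝ) (hζ : ∀ j, 0 < ζ j)
    (hconv : Summable fun n : Fin d → ℕ => c n * ∏ j, ζ j ^ n j) :
    (∀ z : Fin d → ℂ, (∀ j, ‖z j‖ ≤ ζ j) → ‖evalC c z‖ ≤ evalR c ζ)
    ∧ (FullRank c →
        ((∀ z : Fin d → ℂ, (∀ j, ‖z j‖ ≤ ζ j) → ‖evalC c z‖ = evalR c ζ →
            z = fun j => (ζ j : ℂ)) ↔ Aperiodic c)) := by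
  refine ⟨fun z hz => norm_evalC_le hnonneg hconv hz, fun hF => ⟨fun huniq q hq hper => ?_,
    fun hap z hz heq => eq_of_norm_evalC_eq hnonneg hζ hconv hF hap hz heq⟩⟩
  obtain ⟨z, hz, heq, hne⟩ := hper.exists_ne_norm_evalC_eq hq hnonneg hζ
  exact hne (huniq z hz heq)
end

section
/- Saddle point inversion: let X and Y be disjoint sets of adversaries and let ζ̃ be the saddle point associated with ℙ(m ≻_α X ∧ m ≼_α Y). Let j ∈ X, X' := X \ {j} and Y' := Y ∪ {j}. Then the saddle point associated with ℙ(m ≻_α X' ∧ m ≼_α Y') has its k-th coordinate equal to ζ̃_k for every k ≠ j, and its j-th coordinate equal to 1/ζ̃_j. -/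
open scoped BigOperators Topology
open Asymptotics Filter

namespace PaperStmt

/-- The characteristic polynomial of a General Independent Culture on `d+1` candidates.
A ranking is a permutation `σ` of `Fin (d+1)`, where `σ c` is the rank of candidate `c`
(lower rank = preferred); candidate `a` is ranked above `b` iff `σ a < σ b`.
The coefficient of `∏_{j ∈ s} x_j` is the probability that the set of adversaries
ranked above the last candidate is exactly `s`. -/
noncomputable def charPoly (d : ℕ) (p : Equiv.Perm (Fin (d+1)) → ℝ) :
    MvPolynomial (Fin d) ℝ :=
  ∑ s : Finset (Fin d),
    MvPolynomial.C
      (∑ σ ∈ Finset.univ.filter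
          (fun σ : Equiv.Perm (Fin (d+1)) =>
            ∀ j : Fin d, (σ j.castSucc < σ (Fin.last d) ↔ j ∈ s)),
        p σ) *
      ∏ j ∈ s, MvPolynomial.X j

/-- Probability that the last candidate is an `α`-winner among `n` voters, where
`β = 1 - α`: the sum of the coefficients of `P(x)^n` over all exponent vectors `ℓ`
with `ℓ j ≤ ⌈β j * n⌉ - 1` for every adversary `j`. -/
noncomputable def probWinner (d : ℕ) (p : Equiv.Perm (Fin (d+1)) → ℝ)
    (β : Fin d → ℝ) (n : ℕ) : ℝ :=
  ∑ ℓ : ((j : Fin d) → Fin ⌈β j * (n : ℝ)⌉₊),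
    MvPolynomial.coeff (Finsupp.equivFunOnFinite.symm fun j => (ℓ j : ℕ))
      ((charPoly d p) ^ n)

/-- The cumulant generating function `K(t) = log P(e^t)` of the characteristic
polynomial. -/
noncomputable def cgf (d : ℕ) (p : Equiv.Perm (Fin (d+1)) → ℝ) (t : Fin d → ℝ) : ℝ :=
  Real.log (MvPolynomial.eval (fun j => Real.exp (t j)) (charPoly d p))

/-- Hessian matrix of a function on `ℝ^d` at a point, via iterated `fderiv`. -/
noncomputable def hess {d : ℕ} (f : (Fin d → ℝ) → ℝ) (τ : Fin d → ℝ) :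
    Matrix (Fin d) (Fin d) ℝ :=
  Matrix.of fun i j =>
    fderiv ℝ (fun t => fderiv ℝ f t (Pi.single j 1)) τ (Pi.single i 1)

end PaperStmt

open PaperStmt

/-!
Negating the `j₀`-th log-coordinate turns the modified polynomial for `(X, Y)` into the one for
`(X \ {j₀}, Y ∪ {j₀})`, up to the monomial factor `y_{j₀} = e^{t_{j₀}}`:
`K̃'(t) = t_{j₀} + K̃(t⁻)`, where `t⁻` is `t` with `t_{j₀}` negated. Since `β_{j₀} + α_{j₀} = 1`,
the linear terms absorb this shift, so the new objective is the old one composed with the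
involution `t ↦ t⁻`, which preserves the admissible coordinates. Its unique maximizer is
therefore `τ̃⁻`, i.e. `ζ̃` with its `j₀`-th coordinate inverted.
-/

def negAt {ι : Type*} [DecidableEq ι] (j : ι) (t : ι → ℝ) : ι → ℝ :=
  Function.update t j (-t j)

section negAt

variable {ι : Type*} [DecidableEq ι]

theorem negAt_apply_self (j : ι) (t : ι → ℝ) : negAt j t j = -t j := by
  simp [negAt]

theorem negAt_apply_of_ne {j k : ι} (hk : k ≠ j) (t : ι → ℝ) : negAt j t k = t k := by
  simp [negAt, hk]

theorem negAt_involutive (j : ι) : Function.Involutive (negAt j) := by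
  intro t
  simp [negAt]

theorem sum_negAt_of_notMem {s : Finset ι} {j : ι} (hj : j ∉ s) (f : ι → ℝ → ℝ)
    (t : ι → ℝ) : ∑ i ∈ s, f i (negAt j t i) = ∑ i ∈ s, f i (t i) :=
  Finset.sum_congr rfl fun _ hi => by rw [negAt_apply_of_ne (ne_of_mem_of_not_mem hi hj)]

theorem mapsTo_negAt {U : Finset ι} {j : ι} (hj : j ∈ U) :
    Set.MapsTo (negAt j) {t | ∀ k, k ∉ U → t k = 0} {t | ∀ k, k ∉ U → t k = 0} :=
  fun t ht k hk => by rw [negAt_apply_of_ne (ne_of_mem_of_not_mem hj hk).symm, ht k hk]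

end negAt

theorem lt_comp_of_involutive {α β : Type*} [Preorder β] {S : Set α} {F : α → α}
    (hF : Function.Involutive F) (hFS : Set.MapsTo F S S) {G : α → β} {τ : α}
    (hτ : ∀ t ∈ S, t ≠ τ → G t < G τ) :
    ∀ t ∈ S, t ≠ F τ → (G ∘ F) t < (G ∘ F) (F τ) := by
  intro t ht hne
  rw [Function.comp_apply, Function.comp_apply, hF τ]
  exact hτ (F t) (hFS ht) fun h => hne (by rw [← h, hF t])

section saddle

variable {d : ℕ} (p : Equiv.Perm (Fin (d+1)) → ℝ)

theorem charPoly_eval_pos (hp : ∀ σ, 0 < p σ) {x : Fin d → ℝ} (hx : ∀ j, 0 < x j) :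
    0 < MvPolynomial.eval x (charPoly d p) := by
  simp only [charPoly, map_sum, map_mul, MvPolynomial.eval_C, map_prod, MvPolynomial.eval_X]
  refine Finset.sum_pos' (fun s _ => mul_nonneg (Finset.sum_nonneg fun σ _ => (hp σ).le)
    (Finset.prod_nonneg fun j _ => (hx j).le)) ⟨Finset.univ, Finset.mem_univ _, ?_⟩
  -- under the identity ranking every adversary is ranked above the last candidate
  refine mul_pos (Finset.sum_pos (fun σ _ => hp σ) ⟨1, ?_⟩) (Finset.prod_pos fun j _ => hx j)
  simp [Fin.castSucc_lt_last]

/-- The point `(x_X, 1/y_Y, 1)` at which `P` is evaluated in `P^X_Y(e^t)`. -/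
noncomputable def modifiedPoint (X Y : Finset (Fin d)) (t : Fin d → ℝ) : Fin d → ℝ :=
  fun j => if j ∈ X then Real.exp (t j) else if j ∈ Y then Real.exp (-(t j)) else 1

noncomputable def modifiedCgf (X Y : Finset (Fin d)) (t : Fin d → ℝ) : ℝ :=
  Real.log ((∏ j ∈ Y, Real.exp (t j)) * MvPolynomial.eval (modifiedPoint X Y t) (charPoly d p))

noncomputable def saddleObjective (α β : Fin d → ℝ) (X Y : Finset (Fin d)) (t : Fin d → ℝ) :
    ℝ :=
  -modifiedCgf p X Y t + (∑ j ∈ X, β j * t j) + ∑ j ∈ Y, α j * t j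

theorem modifiedPoint_pos (X Y : Finset (Fin d)) (t : Fin d → ℝ) (j : Fin d) :
    0 < modifiedPoint X Y t j := by
  unfold modifiedPoint
  split_ifs <;> positivity

theorem modifiedPoint_erase_insert {X : Finset (Fin d)} {j₀ : Fin d} (hj₀ : j₀ ∈ X)
    (Y : Finset (Fin d)) (t : Fin d → ℝ) :
    modifiedPoint (X.erase j₀) (insert j₀ Y) t = modifiedPoint X Y (negAt j₀ t) := by
  funext j
  by_cases hj : j = j₀
  · subst hj
    simp [modifiedPoint, hj₀, negAt_apply_self]
  · simp [modifiedPoint, hj, negAt_apply_of_ne hj]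

theorem modifiedCgf_eq (hp : ∀ σ, 0 < p σ) (X Y : Finset (Fin d)) (t : Fin d → ℝ) :
    modifiedCgf p X Y t =
      ∑ j ∈ Y, t j + Real.log (MvPolynomial.eval (modifiedPoint X Y t) (charPoly d p)) := by
  rw [modifiedCgf, ← Real.exp_sum, Real.log_mul (Real.exp_pos _).ne'
    (charPoly_eval_pos p hp (modifiedPoint_pos X Y t)).ne', Real.log_exp]

theorem modifiedCgf_erase_insert (hp : ∀ σ, 0 < p σ) {X Y : Finset (Fin d)} {j₀ : Fin d}
    (hj₀X : j₀ ∈ X) (hj₀Y : j₀ ∉ Y) (t : Fin d → ℝ) :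
    modifiedCgf p (X.erase j₀) (insert j₀ Y) t = t j₀ + modifiedCgf p X Y (negAt j₀ t) := by
  rw [modifiedCgf_eq p hp, modifiedCgf_eq p hp, modifiedPoint_erase_insert hj₀X,
    Finset.sum_insert hj₀Y, sum_negAt_of_notMem hj₀Y (fun _ x => x)]
  ring

theorem saddleObjective_erase_insert (hp : ∀ σ, 0 < p σ) {α β : Fin d → ℝ}
    {X Y : Finset (Fin d)} {j₀ : Fin d} (hj₀X : j₀ ∈ X) (hj₀Y : j₀ ∉ Y)
    (hαβ : α j₀ + β j₀ = 1) :
    saddleObjective p α β (X.erase j₀) (insert j₀ Y) =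
      saddleObjective p α β X Y ∘ negAt j₀ := by
  funext t
  rw [Function.comp_apply, saddleObjective, saddleObjective,
    modifiedCgf_erase_insert p hp hj₀X hj₀Y, Finset.sum_insert hj₀Y,
    ← Finset.add_sum_erase X _ hj₀X, negAt_apply_self,
    sum_negAt_of_notMem (Finset.notMem_erase j₀ X) (fun j x => β j * x),
    sum_negAt_of_notMem hj₀Y (fun j x => α j * x)]
  linear_combination t j₀ * hαβ

end saddle

theorem saddle_point_inversion_general
    (d : ℕ)
    (p : Equiv.Perm (Fin (d+1)) → ℝ)
    (hp : ∀ σ, 0 < p σ)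
    (α : Fin d → ℝ)
    (β : Fin d → ℝ) (hβ : β = fun j => 1 - α j)
    (X Y : Finset (Fin d)) (hXY : Disjoint X Y)
    -- the modified cumulant generating function `K̃(t) = log P^X_Y(e^t)`
    (Kt : (Fin d → ℝ) → ℝ)
    (hKt : Kt = fun t => Real.log
      ((∏ j ∈ Y, Real.exp (t j)) *
        MvPolynomial.eval
          (fun j => if j ∈ X then Real.exp (t j)
            else if j ∈ Y then Real.exp (-(t j)) else 1)
          (charPoly d p)))
    -- the objective whose unique maximizer is the log saddle point `τ̃`
    (G : (Fin d → ℝ) → ℝ)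
    (hG : G = fun t => -Kt t + (∑ j ∈ X, β j * t j) + ∑ j ∈ Y, α j * t j)
    (τt : Fin d → ℝ)
    (hτdom : ∀ k, k ∉ X ∪ Y → τt k = 0)
    (hτmax : ∀ t : Fin d → ℝ, (∀ k, k ∉ X ∪ Y → t k = 0) → t ≠ τt → G t < G τt)
    -- the saddle point `ζ̃ = e^{τ̃}` associated with `(X, Y)`
    (ζt : Fin d → ℝ) (hζt : ζt = fun k => Real.exp (τt k))
    -- the adversary `j₀ ∈ X` to be transferred from `X` to `Y`
    (j₀ : Fin d) (hj₀ : j₀ ∈ X)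
    (X' Y' : Finset (Fin d)) (hX' : X' = X.erase j₀) (hY' : Y' = insert j₀ Y)
    -- data for the problem associated with `(X', Y')`
    (Kt' : (Fin d → ℝ) → ℝ)
    (hKt' : Kt' = fun t => Real.log
      ((∏ j ∈ Y', Real.exp (t j)) *
        MvPolynomial.eval
          (fun j => if j ∈ X' then Real.exp (t j)
            else if j ∈ Y' then Real.exp (-(t j)) else 1)
          (charPoly d p)))
    (G' : (Fin d → ℝ) → ℝ)
    (hG' : G' = fun t => -Kt' t + (∑ j ∈ X', β j * t j) + ∑ j ∈ Y', α j * t j) :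
    -- conclusion: the saddle point associated with `(X', Y')` has `k`-th coordinate
    -- `ζ̃_k` for `k ≠ j₀` and `1/ζ̃_{j₀}` at `j₀`
    ∃ τ' : Fin d → ℝ,
      (∀ k, k ∉ X' ∪ Y' → τ' k = 0) ∧
      (∀ t : Fin d → ℝ, (∀ k, k ∉ X' ∪ Y' → t k = 0) → t ≠ τ' → G' t < G' τ') ∧
      (∀ k, k ≠ j₀ → Real.exp (τ' k) = ζt k) ∧
      Real.exp (τ' j₀) = (ζt j₀)⁻¹ := by
  subst hβ hζt hX' hY'
  have hj₀Y : j₀ ∉ Y := Finset.disjoint_left.mp hXY hj₀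
  have hU : X.erase j₀ ∪ insert j₀ Y = X ∪ Y := by
    rw [Finset.union_insert, ← Finset.insert_union, Finset.insert_erase hj₀]
  have hmaps := mapsTo_negAt (Finset.mem_union_left Y hj₀)
  obtain rfl : G = saddleObjective p α (fun j => 1 - α j) X Y := by rw [hG, hKt]; rfl
  obtain rfl : G' = saddleObjective p α (fun j => 1 - α j) X Y ∘ negAt j₀ := by
    rw [hG', hKt', ← saddleObjective_erase_insert p hp hj₀ hj₀Y (add_sub_cancel _ _)]; rfl
  refine ⟨negAt j₀ τt, ?_, ?_, fun k hk => by rw [negAt_apply_of_ne hk], ?_⟩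
  · rw [hU]
    exact hmaps hτdom
  · rw [hU]
    exact lt_comp_of_involutive (negAt_involutive j₀) hmaps hτmax
  · rw [negAt_apply_self, Real.exp_neg]

/-- Saddle point inversion. Moving an adversary `j₀` from the set
`X` (pairwise wins of `m`) to the set `Y` (pairwise non-wins of `m`) inverts the
`j₀`-th coordinate of the associated saddle point, and leaves the others unchanged. -/
theorem saddle_point_inversion
    (d : ℕ) (hd : 1 ≤ d)
    (p : Equiv.Perm (Fin (d+1)) → ℝ)
    (hp : ∀ σ, 0 < p σ) (hpsum : ∑ σ : Equiv.Perm (Fin (d+1)), p σ = 1)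
    (α : Fin d → ℝ) (hα : ∀ j, α j ∈ Set.Ioo (0 : ℝ) 1)
    (β : Fin d → ℝ) (hβ : β = fun j => 1 - α j)
    (X Y : Finset (Fin d)) (hXY : Disjoint X Y)
    -- the modified cumulant generating function `K̃(t) = log P^X_Y(e^t)`
    (Kt : (Fin d → ℝ) → ℝ)
    (hKt : Kt = fun t => Real.log
      ((∏ j ∈ Y, Real.exp (t j)) *
        MvPolynomial.eval
          (fun j => if j ∈ X then Real.exp (t j)
            else if j ∈ Y then Real.exp (-(t j)) else 1)
          (charPoly d p)))
    -- the objective whose unique maximizer is the log saddle point `τ̃`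
    (G : (Fin d → ℝ) → ℝ)
    (hG : G = fun t => -Kt t + (∑ j ∈ X, β j * t j) + ∑ j ∈ Y, α j * t j)
    (τt : Fin d → ℝ)
    (hτdom : ∀ k, k ∉ X ∪ Y → τt k = 0)
    (hτmax : ∀ t : Fin d → ℝ, (∀ k, k ∉ X ∪ Y → t k = 0) → t ≠ τt → G t < G τt)
    -- the saddle point `ζ̃ = e^{τ̃}` associated with `(X, Y)`
    (ζt : Fin d → ℝ) (hζt : ζt = fun k => Real.exp (τt k))
    -- the adversary `j₀ ∈ X` to be transferred from `X` to `Y`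
    (j₀ : Fin d) (hj₀ : j₀ ∈ X)
    (X' Y' : Finset (Fin d)) (hX' : X' = X.erase j₀) (hY' : Y' = insert j₀ Y)
    -- data for the problem associated with `(X', Y')`
    (Kt' : (Fin d → ℝ) → ℝ)
    (hKt' : Kt' = fun t => Real.log
      ((∏ j ∈ Y', Real.exp (t j)) *
        MvPolynomial.eval
          (fun j => if j ∈ X' then Real.exp (t j)
            else if j ∈ Y' then Real.exp (-(t j)) else 1)
          (charPoly d p)))
    (G' : (Fin d → ℝ) → ℝ)
    (hG' : G' = fun t => -Kt' t + (∑ j ∈ X', β j * t j) + ∑ j ∈ Y', α j * t j) :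
    -- conclusion: the saddle point associated with `(X', Y')` has `k`-th coordinate
    -- `ζ̃_k` for `k ≠ j₀` and `1/ζ̃_{j₀}` at `j₀`
    ∃ τ' : Fin d → ℝ,
      (∀ k, k ∉ X' ∪ Y' → τ' k = 0) ∧
      (∀ t : Fin d → ℝ, (∀ k, k ∉ X' ∪ Y' → t k = 0) → t ≠ τ' → G' t < G' τ') ∧
      (∀ k, k ≠ j₀ → Real.exp (τ' k) = ζt k) ∧
      Real.exp (τ' j₀) = (ζt j₀)⁻¹ :=
  saddle_point_inversion_general d p hp α β hβ X Y hXY Kt hKt G hG τt hτdom hτmax ζt hζt j₀ hj₀ X'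
    Y' hX' hY' Kt' hKt' G' hG'
end
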